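/- Injectivity of the heat operator on functions of exponential growth: fix an integer d ≥ 1 and real numbers t > 0, a > 0. Let f : ℝ^d → ℂ be continuous with |f(x)| ≤ M e^{a|x|} for all x ∈ ℝ^d and some M > 0. If (f * h_t)(x) = 0 for every x ∈ ℝ^d, then f(x) = 0 for every x ∈ ℝ^d. -/

import Mathlib

open MeasureTheory Complex Filter Topology
open scoped RealInnerProductSpace FourierTransform

/-!
Put `g y = f y e^{-|y|²/4t}`. Expanding `|x - y|²` in the heat kernel turns `(f * h_t)(x)` into
`h_t(x) ∫ g(y) e^{⟨y, x⟩/2t} dy`, so the two-sided Laplace transform of `g` vanishes on `ℝ^d`.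
Since `g` decays like a Gaussian, for each direction `ξ` the map `z ↦ ∫ g(y) e^{z ⟨y, ξ⟩} dy` is
entire; vanishing on the real axis, it vanishes at `z = -2πi`. Hence the Fourier transform of `g`
is zero, and Fourier inversion gives `g = 0`.
-/

noncomputable def heatK (d : ℕ) (t : ℝ) (x : EuclideanSpace ℝ (Fin d)) : ℝ :=
  (4 * Real.pi * t) ^ (-(d : ℝ) / 2) * Real.exp (-‖x‖ ^ 2 / (4 * t))

section Gaussian

variable {V : Type*} [NormedAddCommGroup V] [InnerProductSpace ℝ V] [FiniteDimensional ℝ V]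
  [MeasurableSpace V] [BorelSpace V]

lemma integrable_exp_mul_norm_sub_mul_sq (c : ℝ) {b : ℝ} (hb : 0 < b) :
    Integrable (fun y : V => Real.exp (c * ‖y‖ - b * ‖y‖ ^ 2)) := by
  have hgauss : Integrable (fun y : V => Real.exp (-(b / 2) * ‖y‖ ^ 2)) := by
    simpa [Complex.norm_exp, ← Complex.ofReal_pow] using
      (GaussianFourier.integrable_cexp_neg_mul_sq_norm_add (V := V)
        (b := (b / 2 : ℝ)) (by simpa using half_pos hb) 0 0).norm
  refine (hgauss.const_mul (Real.exp (c ^ 2 / (2 * b)))).mono' (by fun_prop) ?_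
  filter_upwards with y
  rw [Real.norm_of_nonneg (Real.exp_pos _).le, ← Real.exp_add, Real.exp_le_exp]
  have hsq : c ^ 2 / (2 * b) + -(b / 2) * ‖y‖ ^ 2 - (c * ‖y‖ - b * ‖y‖ ^ 2)
      = (c - b * ‖y‖) ^ 2 / (2 * b) := by field_simp; ring
  nlinarith [div_nonneg (sq_nonneg (c - b * ‖y‖)) (by positivity : (0:ℝ) ≤ 2 * b)]

lemma integrable_norm_mul_exp_neg_sq_div_mul_exp {E : Type*} [NormedAddCommGroup E] {f : V → E}
    (hf : AEStronglyMeasurable f) {M a s : ℝ} (hgrowth : ∀ x, ‖f x‖ ≤ M * Real.exp (a * ‖x‖))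
    (hs : 0 < s) (c : ℝ) :
    Integrable (fun y => ‖f y‖ * Real.exp (-‖y‖ ^ 2 / s) * Real.exp (c * ‖y‖)) := by
  refine ((integrable_exp_mul_norm_sub_mul_sq (a + c) (inv_pos.2 hs)).const_mul M).mono'
    (by fun_prop) (Eventually.of_forall fun y => ?_)
  rw [Real.norm_of_nonneg (by positivity)]
  calc ‖f y‖ * Real.exp (-‖y‖ ^ 2 / s) * Real.exp (c * ‖y‖)
      ≤ M * Real.exp (a * ‖y‖) * Real.exp (-‖y‖ ^ 2 / s) * Real.exp (c * ‖y‖) := by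
        gcongr; exact hgrowth y
    _ = M * Real.exp ((a + c) * ‖y‖ - s⁻¹ * ‖y‖ ^ 2) := by
        rw [mul_assoc, mul_assoc, ← Real.exp_add, ← Real.exp_add]; ring_nf

end Gaussian

section Laplace

variable {α : Type*} [MeasurableSpace α] {μ : Measure α} {g : α → ℂ} {X : α → ℝ}

lemma norm_cexp_mul_ofReal_le (z : ℂ) (x : ℝ) : ‖cexp (z * x)‖ ≤ Real.exp (|z.re| * |x|) := by
  rw [Complex.norm_exp, Real.exp_le_exp, re_mul_ofReal, ← abs_mul]
  exact le_abs_self _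

lemma integrable_mul_cexp_mul_ofReal (hg : AEStronglyMeasurable g μ) (hX : AEMeasurable X μ)
    (hexp : ∀ c : ℝ, Integrable (fun ω => ‖g ω‖ * Real.exp (c * |X ω|)) μ) (z : ℂ) :
    Integrable (fun ω => g ω * cexp (z * X ω)) μ := by
  refine (hexp |z.re|).mono' (hg.mul (by fun_prop)) (Eventually.of_forall fun ω => ?_)
  rw [norm_mul]
  gcongr
  exact norm_cexp_mul_ofReal_le z (X ω)

lemma differentiable_integral_mul_cexp_mul_ofReal (hg : AEStronglyMeasurable g μ)
    (hX : AEMeasurable X μ)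
    (hexp : ∀ c : ℝ, Integrable (fun ω => ‖g ω‖ * Real.exp (c * |X ω|)) μ) :
    Differentiable ℂ (fun z : ℂ => ∫ ω, g ω * cexp (z * X ω) ∂μ) := by
  intro z₀
  have hderiv_bound : ∀ᵐ ω ∂μ, ∀ z ∈ Metric.ball z₀ 1,
      ‖g ω * (cexp (z * X ω) * X ω)‖ ≤ ‖g ω‖ * Real.exp ((|z₀.re| + 2) * |X ω|) := by
    refine Eventually.of_forall fun ω z hz => ?_
    have hre : |z.re| ≤ |z₀.re| + 1 := by
      have := (abs_re_le_norm (z - z₀)).trans (mem_ball_iff_norm.1 hz).le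
      rw [sub_re] at this
      linarith [abs_sub_abs_le_abs_sub z.re z₀.re]
    calc ‖g ω * (cexp (z * X ω) * X ω)‖
        ≤ ‖g ω‖ * (Real.exp ((|z₀.re| + 1) * |X ω|) * Real.exp |X ω|) := by
          rw [norm_mul, norm_mul, norm_real, Real.norm_eq_abs]
          gcongr
          · exact (norm_cexp_mul_ofReal_le z (X ω)).trans (by gcongr)
          · linarith [Real.add_one_le_exp |X ω|]
      _ = ‖g ω‖ * Real.exp ((|z₀.re| + 2) * |X ω|) := by
          rw [← Real.exp_add]; ring_nf
  have hint := integrable_mul_cexp_mul_ofReal hg hX hexp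
  have hderiv := hasDerivAt_integral_of_dominated_loc_of_deriv_le
    (Metric.ball_mem_nhds z₀ one_pos)
    (Eventually.of_forall fun z => (hint z).aestronglyMeasurable) (hint z₀)
    (hg.mul (by fun_prop)) hderiv_bound (hexp _)
    (Eventually.of_forall fun ω z _ => ((hasDerivAt_mul_const (X ω : ℂ)).cexp).const_mul (g ω))
  exact hderiv.2.differentiableAt

lemma integral_mul_cexp_mul_ofReal_eq_zero (hg : AEStronglyMeasurable g μ) (hX : AEMeasurable X μ)
    (hexp : ∀ c : ℝ, Integrable (fun ω => ‖g ω‖ * Real.exp (c * |X ω|)) μ)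
    (hreal : ∀ s : ℝ, ∫ ω, g ω * cexp (s * X ω) ∂μ = 0) (z : ℂ) :
    ∫ ω, g ω * cexp (z * X ω) ∂μ = 0 := by
  have hanalytic := (differentiable_integral_mul_cexp_mul_ofReal hg hX hexp).differentiableOn
    |>.analyticOnNhd isOpen_univ
  have hofReal : Tendsto ((↑) : ℝ → ℂ) (𝓝[≠] 0) (𝓝[≠] 0) := by
    simpa using continuous_ofReal.continuousWithinAt.tendsto_nhdsWithin
      (s := {0}ᶜ) (x := 0) fun s hs => ofReal_ne_zero.2 hs
  exact hanalytic.eqOn_zero_of_preconnected_of_frequently_eq_zero isPreconnected_univ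
    (Set.mem_univ 0) (hofReal.frequently (Frequently.of_forall hreal)) (Set.mem_univ z)

end Laplace

section Fourier

variable {V : Type*} [NormedAddCommGroup V] [InnerProductSpace ℝ V] [FiniteDimensional ℝ V]
  [MeasurableSpace V] [BorelSpace V] {g : V → ℂ}

lemma fourier_eq_zero_of_integral_mul_cexp_inner_eq_zero (hg : AEStronglyMeasurable g)
    (hexp : ∀ c : ℝ, Integrable (fun y => ‖g y‖ * Real.exp (c * ‖y‖)))
    (hzero : ∀ v : V, ∫ y, g y * cexp ⟪y, v⟫ = 0) :
    𝓕 g = 0 := by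
  funext ξ
  have hexp_inner : ∀ c : ℝ, Integrable (fun y => ‖g y‖ * Real.exp (c * |⟪y, ξ⟫|)) := by
    refine fun c => (hexp (|c| * ‖ξ‖)).mono' (by fun_prop) (Eventually.of_forall fun y => ?_)
    rw [Real.norm_of_nonneg (by positivity), mul_assoc]
    gcongr ‖g y‖ * Real.exp ?_
    calc c * |⟪y, ξ⟫| ≤ |c| * |⟪y, ξ⟫| := by gcongr; exact le_abs_self c
      _ ≤ |c| * (‖ξ‖ * ‖y‖) := by
        gcongr; exact (abs_real_inner_le_norm y ξ).trans_eq (mul_comm _ _)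
  have hreal : ∀ s : ℝ, ∫ y, g y * cexp (s * ⟪y, ξ⟫) = 0 := fun s => by
    simpa [inner_smul_right] using hzero (s • ξ)
  rw [Real.fourier_eq', Pi.zero_apply, ← integral_mul_cexp_mul_ofReal_eq_zero hg (by fun_prop)
    hexp_inner hreal (-2 * Real.pi * I)]
  congr 1 with y
  rw [smul_eq_mul, mul_comm]
  push_cast
  ring_nf

lemma eq_zero_of_fourier_eq_zero (hg : Continuous g) (hint : Integrable g) (h : 𝓕 g = 0) :
    g = 0 := by
  rw [← hg.fourierInv_fourier_eq hint (by rw [h]; exact integrable_zero _ _ _), h]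
  ext v
  simp [Real.fourierInv_eq]

end Fourier

section HeatKernel

variable {d : ℕ} {t : ℝ}

lemma heatK_pos (ht : 0 < t) (x : EuclideanSpace ℝ (Fin d)) : 0 < heatK d t x := by
  unfold heatK; positivity

lemma heatK_sub (x y : EuclideanSpace ℝ (Fin d)) :
    heatK d t (x - y) = heatK d t x * Real.exp (⟪y, x⟫ / (2 * t) - ‖y‖ ^ 2 / (4 * t)) := by
  rw [heatK, heatK, norm_sub_sq_real, real_inner_comm, mul_assoc _ (Real.exp _), ← Real.exp_add]
  ring_nf

lemma integral_comp_sub_mul_heatK (f : EuclideanSpace ℝ (Fin d) → ℂ)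
    (x : EuclideanSpace ℝ (Fin d)) :
    ∫ y, f (x - y) * (heatK d t y : ℂ) = heatK d t x *
      ∫ y, f y * (Real.exp (-‖y‖ ^ 2 / (4 * t)) : ℂ) * cexp (⟪y, x⟫ / (2 * t) : ℝ) := by
  rw [← integral_sub_left_eq_self _ volume x, ← integral_const_mul]
  congr 1 with y
  rw [sub_sub_cancel, heatK_sub, sub_eq_add_neg, Real.exp_add, neg_div]
  push_cast
  ring

end HeatKernel

theorem statement14_general (d : ℕ) (t a : ℝ) (ht : 0 < t)
    (f : EuclideanSpace ℝ (Fin d) → ℂ) (hf : Continuous f)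
    (M : ℝ)
    (hgrowth : ∀ x, ‖f x‖ ≤ M * Real.exp (a * ‖x‖))
    (heq : ∀ x, (∫ y, f (x - y) * (heatK d t y : ℂ)) = 0) :
    ∀ x, f x = 0 := by
  set g := fun y => f y * (Real.exp (-‖y‖ ^ 2 / (4 * t)) : ℂ)
  have hg_cont : Continuous g := by fun_prop
  have hg_exp : ∀ c : ℝ, Integrable (fun y => ‖g y‖ * Real.exp (c * ‖y‖)) := by
    simpa only [g, norm_mul, norm_real, Real.norm_of_nonneg (Real.exp_pos _).le] using
      integrable_norm_mul_exp_neg_sq_div_mul_exp hf.aestronglyMeasurable hgrowth (s := 4 * t)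
        (by positivity)
  have hg_int : Integrable g :=
    (integrable_norm_iff hg_cont.aestronglyMeasurable).1 (by simpa using hg_exp 0)
  have hzero : ∀ v, ∫ y, g y * cexp ⟪y, v⟫ = 0 := fun v => by
    have h := heq ((2 * t) • v)
    rw [integral_comp_sub_mul_heatK, mul_eq_zero, ofReal_eq_zero] at h
    simpa [g, inner_smul_right, ht.ne'] using h.resolve_left (heatK_pos ht _).ne'
  have hg_zero : g = 0 := eq_zero_of_fourier_eq_zero hg_cont hg_int
    (fourier_eq_zero_of_integral_mul_cexp_inner_eq_zero hg_cont.aestronglyMeasurable hg_exp hzero)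
  intro x
  simpa [g, Real.exp_ne_zero] using congrFun hg_zero x

/-- Injectivity of the heat operator on continuous functions of exponential growth. -/
theorem statement14 (d : ℕ) (hd : 1 ≤ d) (t a : ℝ) (ht : 0 < t) (ha : 0 < a)
    (f : EuclideanSpace ℝ (Fin d) → ℂ) (hf : Continuous f)
    (M : ℝ) (hM : 0 < M)
    (hgrowth : ∀ x, ‖f x‖ ≤ M * Real.exp (a * ‖x‖))
    (heq : ∀ x, (∫ y, f (x - y) * (heatK d t y : ℂ)) = 0) :
    ∀ x, f x = 0 :=
  statement14_general d t a ht f hf M hgrowth heq
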